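/- arXiv:2205.03816 — 2 statements merged into one kernel-verified Lean document; each statement's English description precedes it below -/
import Mathlib

section
/- For every 0 < α < 2, the measure ν_α satisfies the Lévy measure integrability condition: ∫_ℝ min(x², 1) / ((1+|x|)·log^{1+α}(1+|x|)) dx < ∞. -/
/-!
The integrand depends only on `|x|`, so it suffices to integrate over `(0, ∞)`. Near `0`,
`log (1 + t) ≥ 2t/3` makes it at most a constant times `t ^ (1 - α)`, integrable since `α < 2`.
For `t > 1` it is at most `1 / ((1 + t) log^(1+α) (1 + t))`, the derivative of
`-log^(-α) (1 + t) / α`, which tends to `0` at infinity because `α > 0`.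
-/

open MeasureTheory Set Filter Topology

theorem lintegral_comp_abs {f : ℝ → ENNReal} (hf : Measurable f) :
    ∫⁻ x, f |x| = 2 * ∫⁻ x in Ioi 0, f x := by
  have h_split : (fun x => f |x|) =ᵐ[volume]
      fun x => (Ioi 0).indicator f x + (Ioi 0).indicator f (-x) := by
    filter_upwards [Measure.ae_ne volume 0] with x hx
    rcases hx.lt_or_gt with hneg | hpos
    · simp [hneg, hneg.not_gt, abs_of_neg hneg]
    · simp [hpos, hpos.not_gt, abs_of_pos hpos]
  rw [lintegral_congr_ae h_split, lintegral_add_left (hf.indicator measurableSet_Ioi),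
    lintegral_neg_eq_self, lintegral_indicator measurableSet_Ioi, two_mul]

theorem Real.two_mul_div_three_le_log_one_add {t : ℝ} (ht₀ : 0 ≤ t) (ht₁ : t ≤ 1) :
    2 * t / 3 ≤ Real.log (1 + t) := by
  refine le_trans ?_ (Real.le_log_one_add_of_nonneg ht₀)
  gcongr
  linarith

theorem hasDerivAt_log_one_add_rpow_div {p x : ℝ} (hp : p ≠ 1) (hx : 0 < x) :
    HasDerivAt (fun y => Real.log (1 + y) ^ (1 - p) / (1 - p))
      (1 / ((1 + x) * Real.log (1 + x) ^ p)) x := by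
  have hlog : 0 < Real.log (1 + x) := Real.log_pos (by linarith)
  have hlog_deriv : HasDerivAt (fun y => Real.log (1 + y)) (1 / (1 + x)) x := by
    simpa using ((hasDerivAt_id x).const_add 1).log (by simp; linarith)
  refine ((hlog_deriv.rpow_const (Or.inl hlog.ne')).div_const (1 - p)).congr_deriv ?_
  rw [sub_sub_cancel_left, Real.rpow_neg hlog.le]
  field_simp [sub_ne_zero.2 hp.symm]

theorem integrableOn_Ioi_one_div_one_add_mul_log_rpow {p c : ℝ} (hp : 1 < p) (hc : 0 < c) :
    IntegrableOn (fun x => 1 / ((1 + x) * Real.log (1 + x) ^ p)) (Ioi c) := by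
  have hlog_tendsto : Tendsto (fun y : ℝ => Real.log (1 + y)) atTop atTop :=
    Real.tendsto_log_atTop.comp (tendsto_atTop_add_const_left _ 1 tendsto_id)
  have hlim : Tendsto (fun y => Real.log (1 + y) ^ (1 - p) / (1 - p)) atTop
      (𝓝 (0 / (1 - p))) := by
    have := (tendsto_rpow_neg_atTop (by linarith : 0 < p - 1)).comp hlog_tendsto
    rw [neg_sub] at this
    exact this.div_const _
  refine integrableOn_Ioi_deriv_of_nonneg'
    (fun x hx => hasDerivAt_log_one_add_rpow_div hp.ne' (hc.trans_le hx)) (fun x hx => ?_) hlim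
  have hlog : 0 < Real.log (1 + x) := Real.log_pos (by linarith [hc.trans hx])
  have : 0 < 1 + x := by linarith [hc.trans hx]
  positivity

noncomputable def levyIntegrand (α t : ℝ) : ℝ :=
  min (t ^ 2) 1 / ((1 + t) * Real.log (1 + t) ^ (1 + α))

theorem measurable_levyIntegrand (α : ℝ) : Measurable (levyIntegrand α) := by
  unfold levyIntegrand
  fun_prop

theorem levyIntegrand_nonneg (α : ℝ) {t : ℝ} (ht : 0 ≤ t) : 0 ≤ levyIntegrand α t := by
  have : 0 ≤ Real.log (1 + t) := Real.log_nonneg (by linarith)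
  unfold levyIntegrand
  positivity

theorem levyIntegrand_le_one_div (α : ℝ) {t : ℝ} (ht : 0 ≤ t) :
    levyIntegrand α t ≤ 1 / ((1 + t) * Real.log (1 + t) ^ (1 + α)) := by
  have : 0 ≤ Real.log (1 + t) := Real.log_nonneg (by linarith)
  exact div_le_div_of_nonneg_right (min_le_right _ _) (by positivity)

theorem levyIntegrand_le_rpow {α t : ℝ} (hα : -1 ≤ α) (ht₀ : 0 < t) (ht₁ : t ≤ 1) :
    levyIntegrand α t ≤ (3 / 2) ^ (1 + α) * t ^ (1 - α) := by
  have hlog := Real.two_mul_div_three_le_log_one_add ht₀.le ht₁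
  have hlog_nonneg : 0 ≤ Real.log (1 + t) := by linarith
  have hden : (2 * t / 3) ^ (1 + α) ≤ (1 + t) * Real.log (1 + t) ^ (1 + α) := by
    calc (2 * t / 3) ^ (1 + α) ≤ Real.log (1 + t) ^ (1 + α) := by gcongr; linarith
      _ ≤ (1 + t) * Real.log (1 + t) ^ (1 + α) :=
        le_mul_of_one_le_left (by positivity) (by linarith)
  calc levyIntegrand α t ≤ t ^ 2 / (2 * t / 3) ^ (1 + α) :=
        div_le_div₀ (sq_nonneg t) (min_le_left _ _) (by positivity) hden
    _ = (3 / 2) ^ (1 + α) * t ^ (1 - α) := by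
      rw [← Real.rpow_natCast, show 2 * t / 3 = t / (3 / 2) by ring,
        Real.div_rpow ht₀.le (by norm_num), div_div_eq_mul_div, mul_div_assoc,
        mul_div_left_comm, ← Real.rpow_sub ht₀]
      ring_nf

theorem integrableOn_Ioi_levyIntegrand {α : ℝ} (hα0 : 0 < α) (hα2 : α < 2) :
    IntegrableOn (levyIntegrand α) (Ioi 0) := by
  rw [← Ioc_union_Ioi_eq_Ioi zero_le_one]
  refine IntegrableOn.union ?_ ?_
  · have hrpow : IntegrableOn (fun t : ℝ => (3 / 2) ^ (1 + α) * t ^ (1 - α)) (Ioc 0 1) :=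
      ((intervalIntegral.intervalIntegrable_rpow' (by linarith)).1).const_mul _
    refine hrpow.mono' (measurable_levyIntegrand α).aestronglyMeasurable ?_
    filter_upwards [ae_restrict_mem measurableSet_Ioc] with t ht
    rw [Real.norm_of_nonneg (levyIntegrand_nonneg α ht.1.le)]
    exact levyIntegrand_le_rpow (by linarith) ht.1 ht.2
  · have htail := integrableOn_Ioi_one_div_one_add_mul_log_rpow (p := 1 + α)
      (by linarith) zero_lt_one
    refine htail.mono' (measurable_levyIntegrand α).aestronglyMeasurable ?_
    filter_upwards [ae_restrict_mem measurableSet_Ioi] with t ht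
    have ht₀ : (0 : ℝ) ≤ t := zero_le_one.trans ht.le
    rw [Real.norm_of_nonneg (levyIntegrand_nonneg α ht₀)]
    exact levyIntegrand_le_one_div α ht₀

/-- For every `0 < α < 2`, the Lévy measure `ν_α` with density
`x ↦ 1/((1+|x|)·log^{1+α}(1+|x|))` satisfies the Lévy integrability condition
`∫ min(x², 1) dν_α < ∞`. -/
theorem levy_integrability_condition (α : ℝ) (hα0 : 0 < α) (hα2 : α < 2) :
    ∫⁻ x : ℝ, ENNReal.ofReal
      (min (x ^ 2) 1 / ((1 + |x|) * Real.log (1 + |x|) ^ (1 + α))) < ⊤ := by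
  have h_abs : ∀ x : ℝ, min (x ^ 2) 1 / ((1 + |x|) * Real.log (1 + |x|) ^ (1 + α))
      = levyIntegrand α |x| := by
    simp [levyIntegrand, sq_abs]
  simp_rw [h_abs]
  rw [lintegral_comp_abs (measurable_levyIntegrand α).ennreal_ofReal]
  exact ENNReal.mul_lt_top ENNReal.ofNat_lt_top
    (integrableOn_Ioi_levyIntegrand hα0 hα2).lintegral_lt_top
end

section
/- For every 0 < α < 2, define the Pruitt index function h̄(r) = ν'_α({x : |x| > r}) + r^{-2}·∫_{|x| ≤ r} x² dν'_α(x) + r^{-1}·|∫_{1 < |x| ≤ r} x dν'_α(x)| for r ≥ 1. Then h̄(r) ≥ 2/(α·log^α(1+r)) for all r ≥ 1. -/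
open MeasureTheory

/-- The Lévy measure `ν_α` of the `K_α` process: density
`x ↦ 1/((1+|x|)·log^{1+α}(1+|x|))` with respect to Lebesgue measure. -/
noncomputable def nuAlpha (α : ℝ) : Measure ℝ :=
  volume.withDensity fun x =>
    ENNReal.ofReal (1 / ((1 + |x|) * Real.log (1 + |x|) ^ (1 + α)))

/-- The large-jump part `ν'_α`: restriction of `ν_α` to `{x : |x| > 1}`. -/
noncomputable def nuAlpha' (α : ℝ) : Measure ℝ :=
  (nuAlpha α).restrict {x : ℝ | 1 < |x|}

/-- The Pruitt index function
`h̄(r) = ν'_α({|x| > r}) + r⁻²·∫_{|x| ≤ r} x² dν'_α + r⁻¹·|∫_{1 < |x| ≤ r} x dν'_α|`. -/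
noncomputable def hbar (α r : ℝ) : ℝ :=
  (nuAlpha' α {x : ℝ | r < |x|}).toReal
    + (r ^ 2)⁻¹ * ∫ x in {x : ℝ | |x| ≤ r}, x ^ 2 ∂(nuAlpha' α)
    + r⁻¹ * |∫ x in {x : ℝ | 1 < |x| ∧ |x| ≤ r}, x ∂(nuAlpha' α)|

/-! The whole of `h̄(r)` is bounded below by its first term, the tail mass `ν'_α{|x| > r}`,
which can be computed exactly: `-α⁻¹ log^{-α}(1+t)` is an antiderivative of the density on
`t > 0` and vanishes at infinity, so each half-line `{±x > r}` carries mass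
`1/(α log^α(1+r))`. -/

open Set Filter

theorem hasDerivAt_neg_inv_mul_log_one_add_rpow_neg {α x : ℝ} (hα : α ≠ 0) (hx : 0 < x) :
    HasDerivAt (fun y : ℝ => -α⁻¹ * Real.log (1 + y) ^ (-α))
      (1 / ((1 + x) * Real.log (1 + x) ^ (1 + α))) x := by
  have hlog : 0 < Real.log (1 + x) := Real.log_pos (by linarith)
  have hlog_deriv : HasDerivAt (fun y : ℝ => Real.log (1 + y)) (1 / (1 + x)) x := by
    simpa using ((hasDerivAt_id x).const_add 1).log (by positivity)
  refine ((hlog_deriv.rpow_const (p := -α) (Or.inl hlog.ne')).const_mul (-α⁻¹)).congr_deriv ?_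
  rw [show -α - 1 = -(1 + α) by ring, Real.rpow_neg hlog.le]
  have : Real.log (1 + x) ^ (1 + α) ≠ 0 := (Real.rpow_pos_of_pos hlog _).ne'
  field_simp

theorem lintegral_Ioi_ofReal_inv_one_add_mul_log_rpow {α r : ℝ} (hα : 0 < α) (hr : 0 < r) :
    ∫⁻ t in Ioi r, ENNReal.ofReal (1 / ((1 + t) * Real.log (1 + t) ^ (1 + α))) =
      ENNReal.ofReal (1 / (α * Real.log (1 + r) ^ α)) := by
  have hderiv : ∀ t ∈ Ioi r, HasDerivAt (fun y : ℝ => -α⁻¹ * Real.log (1 + y) ^ (-α))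
      (1 / ((1 + t) * Real.log (1 + t) ^ (1 + α))) t :=
    fun t ht => hasDerivAt_neg_inv_mul_log_one_add_rpow_neg hα.ne' (hr.trans ht)
  have hnonneg : ∀ t ∈ Ioi r, 0 ≤ 1 / ((1 + t) * Real.log (1 + t) ^ (1 + α)) := by
    intro t ht
    have ht0 : 0 < t := hr.trans ht
    have : 0 < Real.log (1 + t) := Real.log_pos (by linarith)
    positivity
  have hcont : ContinuousWithinAt (fun y : ℝ => -α⁻¹ * Real.log (1 + y) ^ (-α)) (Ici r) r :=
    (hasDerivAt_neg_inv_mul_log_one_add_rpow_neg hα.ne' hr).continuousAt.continuousWithinAt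
  have hlim : Tendsto (fun y : ℝ => -α⁻¹ * Real.log (1 + y) ^ (-α)) atTop (nhds 0) := by
    have hlog : Tendsto (fun y : ℝ => Real.log (1 + y)) atTop atTop :=
      Real.tendsto_log_atTop.comp (tendsto_atTop_add_const_left atTop 1 tendsto_id)
    simpa using ((tendsto_rpow_neg_atTop hα).comp hlog).const_mul (-α⁻¹)
  rw [← ofReal_integral_eq_lintegral_ofReal
      (integrableOn_Ioi_deriv_of_nonneg hcont hderiv hnonneg hlim)
      ((ae_restrict_iff' measurableSet_Ioi).2 (ae_of_all _ hnonneg)),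
    integral_Ioi_of_hasDerivAt_of_nonneg hcont hderiv hnonneg hlim]
  have hlogr : 0 < Real.log (1 + r) := Real.log_pos (by linarith)
  rw [Real.rpow_neg hlogr.le]
  congr 1
  field_simp
  ring

theorem setLIntegral_abs_gt_comp_abs (g : ℝ → ENNReal) {r : ℝ} (hr : 0 ≤ r) :
    ∫⁻ x in {x : ℝ | r < |x|}, g |x| = 2 * ∫⁻ x in Ioi r, g x := by
  have hsplit : {x : ℝ | r < |x|} = Iio (-r) ∪ Ioi r := by
    ext x
    simp only [mem_ofPred_eq, lt_abs, mem_union, mem_Iio, mem_Ioi, lt_neg]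
    tauto
  have hdisj : Disjoint (Iio (-r)) (Ioi r) :=
    Iio_disjoint_Ioi_of_le (by linarith)
  have hneg : ∫⁻ x in Iio (-r), g |x| = ∫⁻ x in Ioi r, g |x| := by
    have := (Measure.measurePreserving_neg (volume : Measure ℝ)).setLIntegral_comp_preimage_emb
      (MeasurableEquiv.neg ℝ).measurableEmbedding (fun x => g |x|) (Ioi r)
    simpa only [abs_neg, neg_preimage, neg_Ioi] using this
  have hpos : ∫⁻ x in Ioi r, g |x| = ∫⁻ x in Ioi r, g x :=
    setLIntegral_congr_fun measurableSet_Ioi fun x hx => by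
      rw [abs_of_pos (hr.trans_lt hx)]
  rw [hsplit, lintegral_union measurableSet_Ioi hdisj, hneg, hpos, two_mul]

theorem nuAlpha'_abs_gt {α r : ℝ} (hα : 0 < α) (hr : 1 ≤ r) :
    nuAlpha' α {x : ℝ | r < |x|} = ENNReal.ofReal (2 / (α * Real.log (1 + r) ^ α)) := by
  have hs : MeasurableSet {x : ℝ | r < |x|} := measurableSet_lt measurable_const measurable_abs
  have hsub : {x : ℝ | r < |x|} ⊆ {x : ℝ | 1 < |x|} := fun x hx => hr.trans_lt hx
  rw [nuAlpha', Measure.restrict_apply hs, inter_eq_self_of_subset_left hsub, nuAlpha,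
    withDensity_apply _ hs,
    setLIntegral_abs_gt_comp_abs
      (fun t => ENNReal.ofReal (1 / ((1 + t) * Real.log (1 + t) ^ (1 + α)))) (by linarith),
    lintegral_Ioi_ofReal_inv_one_add_mul_log_rpow hα (by linarith),
    ← ENNReal.ofReal_ofNat 2, ← ENNReal.ofReal_mul zero_le_two]
  ring_nf

theorem hbar_ge_general (α r : ℝ) (hα0 : 0 < α) (hr : 1 ≤ r) :
    hbar α r ≥ 2 / (α * Real.log (1 + r) ^ α) := by
  have htail : (nuAlpha' α {x : ℝ | r < |x|}).toReal = 2 / (α * Real.log (1 + r) ^ α) := by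
    have : 0 < Real.log (1 + r) := Real.log_pos (by linarith)
    rw [nuAlpha'_abs_gt hα0 hr, ENNReal.toReal_ofReal (by positivity)]
  have hsecond : 0 ≤ (r ^ 2)⁻¹ * ∫ x in {x : ℝ | |x| ≤ r}, x ^ 2 ∂(nuAlpha' α) :=
    mul_nonneg (inv_nonneg.2 (sq_nonneg r)) (integral_nonneg fun x => sq_nonneg x)
  have hthird : 0 ≤ r⁻¹ * |∫ x in {x : ℝ | 1 < |x| ∧ |x| ≤ r}, x ∂(nuAlpha' α)| :=
    mul_nonneg (inv_nonneg.2 (by linarith)) (abs_nonneg _)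
  rw [hbar, htail]
  linarith

/-- For every `0 < α < 2` and every `r ≥ 1`, the Pruitt index function satisfies
`h̄(r) ≥ 2/(α·log^α(1+r))`. -/
theorem hbar_ge (α r : ℝ) (hα0 : 0 < α) (hα2 : α < 2) (hr : 1 ≤ r) :
    hbar α r ≥ 2 / (α * Real.log (1 + r) ^ α) :=
  hbar_ge_general α r hα0 hr
end
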